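/- For every positive integer n, (2n−1)!! < (2n)!!/√(πn); equivalently, √(πn) · (1·3·5⋯(2n−1)) < 2^n · n!. -/

import Mathlib

/-- `(2k-1)!! = 1 * 3 * 5 * ... * (2k-1)`, with `(-1)!! = 1`. -/
def oddFactorial : ℕ → ℕ
  | 0 => 1
  | k + 1 => (2 * k + 1) * oddFactorial k

/-!
Wallis' partial product `W n` equals `((2n)!! / (2n-1)!!)² / (2n+1)`, and the comparison of
`∫ sin^(2n+1)` with `∫ sin^(2n)` on `[0, π]` gives `W n ≥ (2n+1)/(2n+2) · π/2`. Hence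
`((2n)!! / (2n-1)!!)² ≥ π (2n+1)² / (4n+4) > π n`, because `(2n+1)² > 4n(n+1)`.
-/

open Nat Real

theorem oddFactorial_mul_two_pow_mul_factorial (n : ℕ) :
    oddFactorial n * (2 ^ n * n !) = (2 * n)! := by
  induction n with
  | zero => rfl
  | succ k ih =>
    rw [show 2 * (k + 1) = 2 * k + 1 + 1 by ring, factorial_succ (2 * k + 1),
      factorial_succ (2 * k), ← ih, oddFactorial, factorial_succ]
    ring

theorem oddFactorial_pos (n : ℕ) : 0 < oddFactorial n := by
  induction n with
  | zero => exact Nat.one_pos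
  | succ k ih => exact Nat.mul_pos (Nat.succ_pos _) ih

namespace Real.Wallis

theorem two_mul_add_one_mul_W_mul_oddFactorial_sq (n : ℕ) :
    (2 * n + 1) * W n * (oddFactorial n : ℝ) ^ 2 = ((2 : ℝ) ^ n * n !) ^ 2 := by
  have hprod : (oddFactorial n : ℝ) * (2 ^ n * n !) = (2 * n)! := by
    exact_mod_cast oddFactorial_mul_two_pow_mul_factorial n
  have hodd : (0 : ℝ) < oddFactorial n := by exact_mod_cast oddFactorial_pos n
  rw [W_eq_factorial_ratio, ← hprod]
  field_simp
  ring

theorem pi_mul_lt_two_mul_add_one_mul_W (n : ℕ) : π * n < (2 * n + 1) * W n :=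
  calc π * n < π * ((2 * n + 1) ^ 2 / (4 * n + 4)) := by
        gcongr
        rw [lt_div_iff₀ (by positivity)]
        nlinarith
    _ = (2 * n + 1) * ((2 * n + 1) / (2 * n + 2) * (π / 2)) := by
        field_simp
        ring
    _ ≤ (2 * n + 1) * W n := by gcongr; exact le_W n

end Real.Wallis

open Real.Wallis in
theorem doubleFactorial_lt_general (n : ℕ) :
    Real.sqrt (Real.pi * n) * (oddFactorial n : ℝ) < (2 : ℝ) ^ n * (n.factorial : ℝ) := by
  have hodd : (0 : ℝ) < oddFactorial n := by exact_mod_cast oddFactorial_pos n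
  refine lt_of_pow_lt_pow_left₀ 2 (by positivity) ?_
  calc (Real.sqrt (π * n) * oddFactorial n) ^ 2 = π * n * (oddFactorial n : ℝ) ^ 2 := by
        rw [mul_pow, sq_sqrt (by positivity)]
    _ < (2 * n + 1) * W n * (oddFactorial n : ℝ) ^ 2 :=
        mul_lt_mul_of_pos_right (pi_mul_lt_two_mul_add_one_mul_W n) (pow_pos hodd 2)
    _ = ((2 : ℝ) ^ n * n !) ^ 2 := two_mul_add_one_mul_W_mul_oddFactorial_sq n

theorem doubleFactorial_lt (n : ℕ) (hn : 0 < n) :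
    Real.sqrt (Real.pi * n) * (oddFactorial n : ℝ) < (2 : ℝ) ^ n * (n.factorial : ℝ) :=
  doubleFactorial_lt_general n
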